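/- arXiv:2510.03084 — 4 statements merged into one kernel-verified Lean document; each statement's English description precedes it below -/
import Mathlib

section
/- Let 0 < α ≤ 1 and let A ⊆ ℕ be a finite nonempty set. If χ : A → ℕ is an α-bounded colouring, then there exist a positive integer r ≤ 4/α and an α-bounded colouring φ : A → {1,...,r} such that φ is a merging of χ. -/
/-!
Merge two colour classes as long as both have size at most `α|A|/2`: the merged class still has
size at most `α|A|`, and the number of colours drops. When this stops, all colour classes but at
most one have more than `α|A|/2` elements, so there are at most `2/α + 1 ≤ 4/α` colours, which
can then be relabelled injectively as `1, …, r`.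
-/

/-- The colouring `χ` of `A` is `α`-bounded: every colour class has size at most `α|A|`. -/
def BddColoring (α : ℝ) (A : Finset ℕ) (χ : ℕ → ℕ) : Prop :=
  ∀ i : ℕ, ((A.filter fun a => χ a = i).card : ℝ) ≤ α * A.card

open Finset

section

variable {ι κ : Type*} [DecidableEq κ]

theorem Finset.card_mul_le_card_of_forall_le_card_fiber (A : Finset ι) (f : ι → κ)
    (T : Finset κ) (c : ℝ) (hT : ∀ k ∈ T, c ≤ #{a ∈ A | f a = k}) : #T * c ≤ #A := by
  have hsum : ∑ k ∈ T, (#{a ∈ A | f a = k} : ℝ) ≤ #A := by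
    exact_mod_cast (sum_card_fiberwise_eq_card_filter A T f).trans_le (card_filter_le _ _)
  simpa [nsmul_eq_mul] using (card_nsmul_le_sum T _ c hT).trans hsum

theorem Finset.card_image_lt_of_not_injOn {s : Finset ι} {g : ι → κ} (hg : ¬Set.InjOn g s) :
    #(s.image g) < #s :=
  card_image_le.lt_of_ne (mt card_image_iff.mp hg)

theorem Finset.exists_injOn_mapsTo_Icc (s : Finset ι) :
    ∃ σ : ι → ℕ, Set.InjOn σ s ∧ ∀ c ∈ s, σ c ∈ Icc 1 #s := by
  classical
  refine ⟨fun c => if h : c ∈ s then s.equivFin ⟨c, h⟩ + 1 else 0, ?_, ?_⟩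
  · intro c hc c' hc' h
    simp only [mem_coe] at hc hc'
    simp only [dif_pos hc, dif_pos hc', add_left_inj, Fin.val_inj,
      EmbeddingLike.apply_eq_iff_eq, Subtype.mk.injEq] at h
    exact h
  · intro c hc
    simp only [dif_pos hc, mem_Icc]
    exact ⟨Nat.le_add_left _ _, Fin.is_lt _⟩

end

namespace BddColoring

variable {α : ℝ} {A : Finset ℕ} {χ : ℕ → ℕ}

theorem comp_of_injOn (hα : 0 ≤ α) (hχ : BddColoring α A χ) {σ : ℕ → ℕ}
    (hσ : Set.InjOn σ (A.image χ)) : BddColoring α A (σ ∘ χ) := by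
  intro k
  rcases eq_empty_or_nonempty {a ∈ A | σ (χ a) = k} with hempty | ⟨a₀, ha₀⟩
  · simp only [Function.comp_apply, hempty, card_empty, Nat.cast_zero]
    positivity
  · rw [mem_filter] at ha₀
    have hsub : {a ∈ A | σ (χ a) = k} ⊆ {a ∈ A | χ a = χ a₀} := by
      intro a ha
      rw [mem_filter] at ha ⊢
      exact ⟨ha.1, hσ (mem_coe.mpr (mem_image_of_mem χ ha.1))
        (mem_coe.mpr (mem_image_of_mem χ ha₀.1)) (ha.2.trans ha₀.2.symm)⟩
    exact le_trans (by exact_mod_cast card_le_card hsub) (hχ (χ a₀))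

theorem merge (hχ : BddColoring α A χ) {i j : ℕ} (hi : (#{a ∈ A | χ a = i} : ℝ) ≤ α * #A / 2)
    (hj : (#{a ∈ A | χ a = j} : ℝ) ≤ α * #A / 2) :
    BddColoring α A (fun a => if χ a = j then i else χ a) := by
  intro k
  by_cases hk : k = i
  · subst hk
    have hsub : {a ∈ A | (if χ a = j then k else χ a) = k}
        ⊆ {a ∈ A | χ a = k} ∪ {a ∈ A | χ a = j} := by
      intro a
      simp only [mem_filter, mem_union]
      split_ifs <;> tauto
    calc (#{a ∈ A | (if χ a = j then k else χ a) = k} : ℝ)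
        ≤ #{a ∈ A | χ a = k} + #{a ∈ A | χ a = j} := by
          exact_mod_cast (card_le_card hsub).trans (card_union_le _ _)
      _ ≤ α * #A := by linarith
  · have hsub : {a ∈ A | (if χ a = j then i else χ a) = k} ⊆ {a ∈ A | χ a = k} := by
      intro a
      simp only [mem_filter]
      split_ifs <;> grind
    exact le_trans (by exact_mod_cast card_le_card hsub) (hχ k)

end BddColoring

noncomputable def smallColours (α : ℝ) (A : Finset ℕ) (χ : ℕ → ℕ) : Finset ℕ :=
  {i ∈ A.image χ | (#{a ∈ A | χ a = i} : ℝ) ≤ α * #A / 2}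

theorem exists_merging_card_smallColours_le_one (α : ℝ) (A : Finset ℕ) (χ : ℕ → ℕ)
    (hχ : BddColoring α A χ) :
    ∃ φ : ℕ → ℕ, BddColoring α A φ ∧ (∃ π : ℕ → ℕ, ∀ a ∈ A, φ a = π (χ a)) ∧
      #(smallColours α A φ) ≤ 1 := by
  induction hn : #(A.image χ) using Nat.strong_induction_on generalizing χ with
  | _ n ih =>
    by_cases hsmall : #(smallColours α A χ) ≤ 1
    · exact ⟨χ, hχ, ⟨id, fun _ _ => rfl⟩, hsmall⟩
    obtain ⟨i, hi, j, hj, hij⟩ := one_lt_card.mp (not_le.mp hsmall)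
    simp only [smallColours, mem_filter] at hi hj
    set g : ℕ → ℕ := fun c => if c = j then i else c
    have hfewer : #(A.image (g ∘ χ)) < n := by
      rw [← image_image, ← hn]
      refine card_image_lt_of_not_injOn fun hinj => hij (hinj hi.1 hj.1 ?_)
      simp [g]
    obtain ⟨φ, hφ, ⟨π, hπ⟩, hφsmall⟩ := ih _ hfewer (g ∘ χ) (hχ.merge hi.2 hj.2) rfl
    exact ⟨φ, hφ, ⟨π ∘ g, hπ⟩, hφsmall⟩

theorem card_image_le_of_card_smallColours_le_one {α : ℝ} (hα : 0 < α) (hα1 : α ≤ 1)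
    {A : Finset ℕ} (hA : A.Nonempty) {φ : ℕ → ℕ} (hφ : #(smallColours α A φ) ≤ 1) :
    (#(A.image φ) : ℝ) ≤ 4 / α := by
  set large := {i ∈ A.image φ | ¬(#{a ∈ A | φ a = i} : ℝ) ≤ α * #A / 2}
  have hsplit : #(smallColours α A φ) + #large = #(A.image φ) :=
    card_filter_add_card_filter_not _
  have hlarge : (#large : ℝ) * (α * #A / 2) ≤ #A :=
    card_mul_le_card_of_forall_le_card_fiber A φ large _ fun _ hi =>
      (not_le.mp (mem_filter.mp hi).2).le
  have hA0 : (0 : ℝ) < #A := by exact_mod_cast hA.card_pos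
  have hlarge' : (#large : ℝ) ≤ 2 / α := by
    rw [le_div_iff₀ hα]
    nlinarith
  have hone : (1 : ℝ) ≤ 2 / α := by rw [le_div_iff₀ hα]; linarith
  have hsplit' : (#(A.image φ) : ℝ) ≤ 1 + #large := by
    exact_mod_cast (show #(A.image φ) ≤ 1 + #large by omega)
  linarith [show (2 : ℝ) / α + 2 / α = 4 / α by ring]

theorem colour_merging :
    ∀ α : ℝ, 0 < α → α ≤ 1 → ∀ A : Finset ℕ, A.Nonempty →
      ∀ χ : ℕ → ℕ, BddColoring α A χ →
        ∃ r : ℕ, 0 < r ∧ (r : ℝ) ≤ 4 / α ∧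
          ∃ φ : ℕ → ℕ, (∀ a ∈ A, φ a ∈ Finset.Icc 1 r) ∧ BddColoring α A φ ∧
            ∃ π : ℕ → ℕ, ∀ a ∈ A, φ a = π (χ a) := by
  intro α hα hα1 A hA χ hχ
  obtain ⟨φ, hφ, ⟨π, hπ⟩, hφsmall⟩ := exists_merging_card_smallColours_le_one α A χ hχ
  obtain ⟨σ, hσinj, hσ⟩ := (A.image φ).exists_injOn_mapsTo_Icc
  refine ⟨#(A.image φ), (hA.image φ).card_pos,
    card_image_le_of_card_smallColours_le_one hα hα1 hA hφsmall, σ ∘ φ,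
    fun a ha => hσ _ (mem_image_of_mem φ ha), hφ.comp_of_injOn hα.le hσinj, σ ∘ π,
    fun a ha => congrArg σ (hπ a ha)⟩
end

section
/- For all integers r ≥ k ≥ 3 there exists a constant c > 0 such that for every n ≥ 1 and every 1 ≤ ℓ ≤ k, the rainbow hypergraph R = R(n,k,r) satisfies Δ_ℓ(R) ≤ c · n^{-(ℓ-1)/(k-1)} · e(R)/v(R), where v(R) = rn is the number of vertices and e(R) the number of edges of R. -/
/-- `e` is an edge of the rainbow hypergraph `R(n,k,r)`: a set
`{(ω₁,a₁), …, (ω_k,a_k)}` where `(a₁,…,a_k)` is a `k`-AP contained in `{1,…,n}`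
and the colours `ω₁,…,ω_k ∈ {1,…,r}` are pairwise distinct. -/
def RainbowEdge (n k r : ℕ) (e : Finset (ℕ × ℕ)) : Prop :=
  ∃ (a d : ℕ) (ω : Fin k → ℕ), 1 ≤ d ∧ Function.Injective ω ∧
    (∀ i : Fin k, ω i ∈ Finset.Icc 1 r) ∧
    (∀ i : Fin k, a + (i : ℕ) * d ∈ Finset.Icc 1 n) ∧
    e = Finset.image (fun i : Fin k => (ω i, a + (i : ℕ) * d)) Finset.univ

open scoped Classical in
/-- The edge set of the rainbow hypergraph `R(n,k,r)`, whose vertex set is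
`{1,…,r} × {1,…,n}`. -/
noncomputable def rainbowHG (n k r : ℕ) : Finset (Finset (ℕ × ℕ)) :=
  (Finset.Icc 1 r ×ˢ Finset.Icc 1 n).powerset.filter (RainbowEdge n k r)

/-!
An edge through a fixed vertex is determined by the position of that vertex in the progression,
the common difference and the colouring, so `Δ₁ ≤ k n r^k`; an edge through two vertices at
different positions is determined by their indices in the progression and the colouring, so
`Δ_ℓ ≤ k² r^k` for `ℓ ≥ 2`. Conversely, the progressions with difference at most `n / 2k` and first
term at most `n / 2`, coloured `1, …, k`, give `e(R) ≥ n² / 8k²`. Hence the right-hand side is at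
least a constant times `n^(1 - (ℓ-1)/(k-1))`, which is `n` for `ℓ = 1` and at least `1` otherwise.
-/

open Finset

variable {n k r : ℕ}

def apEdge (k : ℕ) (ω : Fin k → ℕ) (a d : ℕ) : Finset (ℕ × ℕ) :=
  univ.image fun i : Fin k => (ω i, a + i * d)

lemma mem_apEdge {ω : Fin k → ℕ} {a d : ℕ} {p : ℕ × ℕ} :
    p ∈ apEdge k ω a d ↔ ∃ i : Fin k, (ω i, a + i * d) = p := by
  simp [apEdge]

lemma mem_rainbowHG {e : Finset (ℕ × ℕ)} : e ∈ rainbowHG n k r ↔ RainbowEdge n k r e := by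
  classical
  refine ⟨fun he => (mem_filter.1 he).2, fun he => mem_filter.2 ⟨?_, he⟩⟩
  obtain ⟨a, d, ω, -, -, hω, hap, rfl⟩ := he
  refine mem_powerset.2 fun p hp => ?_
  obtain ⟨i, rfl⟩ := mem_apEdge.1 hp
  exact mem_product.2 ⟨hω i, hap i⟩

lemma rainbowHG_eq_empty_of_lt (hk : 0 < k) (hn : n < k) : rainbowHG n k r = ∅ := by
  refine eq_empty_of_forall_notMem fun e he => ?_
  obtain ⟨a, d, ω, hd, -, -, hap, -⟩ := mem_rainbowHG.1 he
  have hfirst := mem_Icc.1 (hap ⟨0, hk⟩)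
  have hlast := mem_Icc.1 (hap ⟨k - 1, by omega⟩)
  have : k - 1 ≤ (k - 1) * d := Nat.le_mul_of_pos_right _ hd
  simp only at hfirst hlast
  omega

lemma eq_of_mem_rainbowHG {e : Finset (ℕ × ℕ)} (he : e ∈ rainbowHG n k r)
    {p q : ℕ × ℕ} (hp : p ∈ e) (hq : q ∈ e) (hpq : p.2 = q.2) : p = q := by
  obtain ⟨a, d, ω, hd, -, -, -, rfl⟩ := mem_rainbowHG.1 he
  obtain ⟨i, rfl⟩ := mem_apEdge.1 hp
  obtain ⟨j, rfl⟩ := mem_apEdge.1 hq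
  have : (i : ℕ) = j := Nat.eq_of_mul_eq_mul_right hd (by simp only at hpq; omega)
  rw [Fin.ext this]

lemma card_filter_mem_rainbowHG_le (hk : 2 ≤ k) (v : ℕ × ℕ) :
    ((rainbowHG n k r).filter (v ∈ ·)).card ≤ k * n * r ^ k := by
  calc _ ≤ ((univ ×ˢ Icc 1 n ×ˢ Fintype.piFinset fun _ : Fin k => Icc 1 r).image
          fun x : Fin k × ℕ × (Fin k → ℕ) => apEdge k x.2.2 (v.2 - x.1 * x.2.1) x.2.1).card := by
        refine card_le_card fun e he => ?_
        obtain ⟨he, hv⟩ := mem_filter.1 he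
        obtain ⟨a, d, ω, hd, -, hω, hap, rfl⟩ := mem_rainbowHG.1 he
        obtain ⟨i, rfl⟩ := mem_apEdge.1 hv
        have hdn := mem_Icc.1 (hap ⟨1, hk⟩)
        refine mem_image.2 ⟨(i, d, ω), ?_, by simp [apEdge]⟩
        simp only [mem_product, mem_univ, mem_Icc, Fintype.mem_piFinset, true_and] at hdn ⊢
        exact ⟨⟨hd, by omega⟩, fun i => mem_Icc.1 (hω i)⟩
    _ ≤ _ := card_image_le
    _ = k * n * r ^ k := by simp [card_product, Fintype.card_piFinset, mul_assoc]

lemma card_filter_mem_mem_rainbowHG_le {p q : ℕ × ℕ} (hpq : p.2 < q.2) :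
    ((rainbowHG n k r).filter fun e => p ∈ e ∧ q ∈ e).card ≤ k * k * r ^ k := by
  calc _ ≤ ((univ ×ˢ univ ×ˢ Fintype.piFinset fun _ : Fin k => Icc 1 r).image
          fun x : Fin k × Fin k × (Fin k → ℕ) =>
            let d := (q.2 - p.2) / (x.2.1 - x.1 : ℕ)
            apEdge k x.2.2 (p.2 - x.1 * d) d).card := by
        refine card_le_card fun e he => ?_
        obtain ⟨he, hp, hq⟩ := mem_filter.1 he
        obtain ⟨a, d, ω, -, -, hω, -, rfl⟩ := mem_rainbowHG.1 he
        obtain ⟨i, rfl⟩ := mem_apEdge.1 hp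
        obtain ⟨j, rfl⟩ := mem_apEdge.1 hq
        simp only at hpq
        have hij : (i : ℕ) < j := Nat.lt_of_mul_lt_mul_right (by omega : i * d < j * d)
        have hgap : a + j * d - (a + i * d) = (j - i : ℕ) * d := by rw [Nat.sub_mul]; omega
        have hd : (a + j * d - (a + i * d)) / (j - i : ℕ) = d := by
          rw [hgap, Nat.mul_div_cancel_left _ (by omega)]
        refine mem_image.2 ⟨(i, j, ω), by simpa using hω, ?_⟩
        simp [hd, apEdge]
    _ ≤ _ := card_image_le
    _ = k * k * r ^ k := by simp [card_product, Fintype.card_piFinset, mul_assoc]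

lemma card_filter_subset_rainbowHG_le_of_mem (hk : 2 ≤ k) {S : Finset (ℕ × ℕ)} {v : ℕ × ℕ}
    (hv : v ∈ S) : ((rainbowHG n k r).filter (S ⊆ ·)).card ≤ k * n * r ^ k :=
  (card_le_card (monotone_filter_right _ fun _ _ hS => hS hv)).trans
    (card_filter_mem_rainbowHG_le hk v)

lemma card_filter_subset_rainbowHG_le_of_one_lt_card {S : Finset (ℕ × ℕ)} (hS : 1 < S.card) :
    ((rainbowHG n k r).filter (S ⊆ ·)).card ≤ k * k * r ^ k := by
  have key : ∀ p ∈ S, ∀ q ∈ S, p.2 < q.2 →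
      ((rainbowHG n k r).filter (S ⊆ ·)).card ≤ k * k * r ^ k := fun p hp q hq hpq =>
    (card_le_card (monotone_filter_right _ fun _ _ hS => ⟨hS hp, hS hq⟩)).trans
      (card_filter_mem_mem_rainbowHG_le hpq)
  obtain ⟨p, hp, q, hq, hne⟩ := one_lt_card.1 hS
  rcases lt_trichotomy p.2 q.2 with hlt | heq | hgt
  · exact key p hp q hq hlt
  · rw [filter_false_of_mem fun e he hSe => hne (eq_of_mem_rainbowHG he (hSe hp) (hSe hq) heq)]
    exact Nat.zero_le _
  · exact key q hq p hp hgt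

lemma mul_le_card_rainbowHG (hk : 2 ≤ k) (hkr : k ≤ r) {A D : ℕ} (hAD : A + (k - 1) * D ≤ n) :
    A * D ≤ (rainbowHG n k r).card := by
  let edge : ℕ × ℕ → Finset (ℕ × ℕ) := fun x => apEdge k (fun i => i + 1) x.1 x.2
  have hmaps : ∀ x ∈ Icc 1 A ×ˢ Icc 1 D, edge x ∈ rainbowHG n k r := by
    rintro ⟨a, d⟩ hx
    obtain ⟨⟨ha, haA⟩, hd, hdD⟩ : (1 ≤ a ∧ a ≤ A) ∧ 1 ≤ d ∧ d ≤ D := by simpa using hx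
    refine mem_rainbowHG.2 ⟨a, d, fun i => i + 1, hd, fun i j hij => Fin.ext (by simpa using hij),
      fun i => mem_Icc.2 ⟨by simp, by simp; omega⟩, fun i => mem_Icc.2 ⟨by omega, ?_⟩, rfl⟩
    have : (i : ℕ) * d ≤ (k - 1) * D := Nat.mul_le_mul (by omega) hdD
    omega
  have hinj : Set.InjOn edge (Icc 1 A ×ˢ Icc 1 D : Finset (ℕ × ℕ)) := by
    rintro ⟨a, d⟩ - ⟨a', d'⟩ - h
    have hfirst : (1, a) ∈ edge (a', d') := h ▸ mem_apEdge.2 ⟨⟨0, by omega⟩, by simp⟩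
    have hsecond : (2, a + d) ∈ edge (a', d') := h ▸ mem_apEdge.2 ⟨⟨1, hk⟩, by simp⟩
    obtain ⟨i, hi⟩ := mem_apEdge.1 hfirst
    obtain ⟨j, hj⟩ := mem_apEdge.1 hsecond
    simp only [Prod.mk.injEq] at hi hj
    have hi0 : (i : ℕ) = 0 := by omega
    have hj1 : (j : ℕ) = 1 := by omega
    rw [hi0] at hi
    rw [hj1] at hj
    simp only [Prod.mk.injEq]
    omega
  simpa using card_le_card_of_injOn edge hmaps hinj

lemma sq_le_card_rainbowHG (hk : 2 ≤ k) (hkr : k ≤ r) (hkn : k ≤ n) :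
    n ^ 2 ≤ 8 * k ^ 2 * (rainbowHG n k r).card := by
  rcases lt_or_ge n (2 * k) with hn | hn
  · have hone : 1 * 1 ≤ (rainbowHG n k r).card := mul_le_card_rainbowHG hk hkr (by omega)
    nlinarith
  · set D := n / (2 * k)
    set A := n - (k - 1) * D
    have hD1 : 1 ≤ D := (Nat.one_le_div_iff (by omega)).2 hn
    have hDn : 2 * (k * D) ≤ n := by rw [← mul_assoc]; exact Nat.mul_div_le n (2 * k)
    have hnD : n < 2 * (k * D) + 2 * k := by
      have : n < 2 * k * (D + 1) := Nat.lt_mul_div_succ n (by omega)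
      linarith
    have hkD : k ≤ k * D := Nat.le_mul_of_pos_right k hD1
    have hkD' : (k - 1) * D ≤ k * D := Nat.mul_le_mul_right D (Nat.sub_le k 1)
    have hcard : A * D ≤ (rainbowHG n k r).card := mul_le_card_rainbowHG hk hkr (by omega)
    calc n ^ 2 = n * n := sq n
      _ ≤ (4 * (k * D)) * (2 * A) := Nat.mul_le_mul (by omega) (by omega)
      _ = 8 * k * (A * D) := by ring
      _ ≤ 8 * k * (rainbowHG n k r).card := Nat.mul_le_mul_left _ hcard
      _ ≤ 8 * k ^ 2 * (rainbowHG n k r).card := by gcongr; nlinarith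

lemma card_filter_subset_rainbowHG_le_rpow (hk : 2 ≤ k) (hn : 1 ≤ n) {S : Finset (ℕ × ℕ)}
    {ℓ : ℕ} (hℓ : 1 ≤ ℓ) (hℓk : ℓ ≤ k) (hS : S.card = ℓ) :
    (((rainbowHG n k r).filter (S ⊆ ·)).card : ℝ) ≤
      k ^ 2 * r ^ k * (n : ℝ) ^ (1 - ((ℓ : ℝ) - 1) / ((k : ℝ) - 1)) := by
  rcases hℓ.eq_or_lt with rfl | hℓ
  · obtain ⟨v, rfl⟩ := card_eq_one.1 hS
    have hdeg : ((rainbowHG n k r).filter (({v} : Finset _) ⊆ ·)).card ≤ k ^ 2 * r ^ k * n :=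
      calc _ ≤ k * n * r ^ k := card_filter_subset_rainbowHG_le_of_mem hk (mem_singleton_self v)
        _ ≤ k * k * (r ^ k * n) := by
          rw [mul_assoc k n, mul_comm n]
          exact Nat.mul_le_mul_right _ (Nat.le_mul_self k)
        _ = k ^ 2 * r ^ k * n := by ring
    simpa using (Nat.cast_le (α := ℝ)).2 hdeg
  · have hexp : 0 ≤ 1 - ((ℓ : ℝ) - 1) / ((k : ℝ) - 1) := by
      rw [sub_nonneg]
      exact div_le_one_of_le₀ (by simpa using hℓk) (by simp; omega)
    calc (((rainbowHG n k r).filter (S ⊆ ·)).card : ℝ) ≤ k * k * r ^ k := by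
          exact_mod_cast card_filter_subset_rainbowHG_le_of_one_lt_card (hS ▸ hℓ)
      _ = k ^ 2 * r ^ k * 1 := by ring
      _ ≤ _ := by gcongr; exact Real.one_le_rpow (by exact_mod_cast hn) hexp

theorem rainbow_hypergraph_degree_bounds :
    ∀ r k : ℕ, 3 ≤ k → k ≤ r → ∃ c : ℝ, 0 < c ∧
      ∀ n : ℕ, 1 ≤ n → ∀ ℓ : ℕ, 1 ≤ ℓ → ℓ ≤ k →
        ∀ S : Finset (ℕ × ℕ), S ⊆ Finset.Icc 1 r ×ˢ Finset.Icc 1 n → S.card = ℓ →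
          (((rainbowHG n k r).filter fun e => S ⊆ e).card : ℝ) ≤
            c * (n : ℝ) ^ (-(((ℓ : ℝ) - 1) / ((k : ℝ) - 1))) *
              ((rainbowHG n k r).card : ℝ) / ((r : ℝ) * n) := by
  intro r k hk hkr
  have hk0 : (0 : ℝ) < k := Nat.cast_pos.2 (by omega)
  have hr0 : (0 : ℝ) < r := Nat.cast_pos.2 (by omega)
  refine ⟨8 * k ^ 4 * r ^ (k + 1), by positivity, fun n hn ℓ hℓ hℓk S _ hS => ?_⟩
  rcases lt_or_ge n k with hnk | hkn
  · simp [rainbowHG_eq_empty_of_lt (by omega) hnk]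
  set t : ℝ := ((ℓ : ℝ) - 1) / ((k : ℝ) - 1)
  have hn0 : (0 : ℝ) < n := Nat.cast_pos.2 (by omega)
  have hedges : (n : ℝ) ^ 2 / (8 * k ^ 2) ≤ (rainbowHG n k r).card := by
    rw [div_le_iff₀ (by positivity), mul_comm]
    exact_mod_cast sq_le_card_rainbowHG (by omega) hkr hkn
  calc (((rainbowHG n k r).filter fun e => S ⊆ e).card : ℝ)
      ≤ k ^ 2 * r ^ k * (n : ℝ) ^ (1 - t) :=
        card_filter_subset_rainbowHG_le_rpow (by omega) hn hℓ hℓk hS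
    _ = 8 * k ^ 4 * r ^ (k + 1) * (n : ℝ) ^ (-t) * ((n : ℝ) ^ 2 / (8 * k ^ 2)) / (r * n) := by
        rw [Real.rpow_sub hn0, Real.rpow_neg hn0.le, Real.rpow_one]
        field_simp
        ring
    _ ≤ _ := by gcongr
end

section
/- Let k ≥ 2 and ℓ ≥ 3 be integers. Every minimal cycle C of length ℓ in a k-uniform hypergraph has exactly (k−1)ℓ vertices, where the vertex set of C is the union of its ℓ edges. -/
/-- The cyclic successor of `i : Fin ℓ`. -/
def cycSucc {ℓ : ℕ} (i : Fin ℓ) : Fin ℓ := ⟨(i.val + 1) % ℓ, Nat.mod_lt _ i.pos⟩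

/-- `(e, v)` is a cycle of length `ℓ ≥ 2` in the hypergraph whose edges are the sets
satisfying `E`: the edges `e 1, …, e ℓ` are distinct, the linking vertices
`v 1, …, v ℓ` are distinct, and `v i ∈ e i ∩ e (i+1)` cyclically. -/
def IsCycle {V : Type} (E : Finset V → Prop) {ℓ : ℕ}
    (e : Fin ℓ → Finset V) (v : Fin ℓ → V) : Prop :=
  2 ≤ ℓ ∧ Function.Injective e ∧ Function.Injective v ∧
    ∀ i : Fin ℓ, E (e i) ∧ v i ∈ e i ∧ v i ∈ e (cycSucc i)

/-- A cycle is minimal if no subset of its edges (with some choice of linking vertices)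
forms a cycle of smaller length. -/
def IsMinCycle {V : Type} (E : Finset V → Prop) {ℓ : ℕ}
    (e : Fin ℓ → Finset V) (v : Fin ℓ → V) : Prop :=
  IsCycle E e v ∧ ∀ ℓ' : ℕ, ℓ' < ℓ → ∀ (e' : Fin ℓ' → Finset V) (v' : Fin ℓ' → V),
    ¬ (IsCycle E e' v' ∧ ∀ i : Fin ℓ', ∃ j : Fin ℓ, e' i = e j)

/-!
In a minimal cycle a vertex `x` can lie in two edges only as the link of two consecutive ones.
Otherwise take edges `e i`, `e (i + d)` containing `x` along the shorter arc, with no edge strictly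
between them containing `x`: the arc `e i, …, e (i + d)` closed up through `x` is a cycle on
`d + 1 < ℓ` edges (here `ℓ ≥ 3` is needed). Hence the sets `e i \ {v i}` are pairwise disjoint,
have `k - 1` vertices each, and still cover the cycle.
-/

open Finset Fin.CommRing

lemma Fin.natCast_inj_of_lt {n : ℕ} [NeZero n] {a b : ℕ} (ha : a < n) (hb : b < n)
    (h : (a : Fin n) = (b : Fin n)) : a = b := by
  simpa [Nat.mod_eq_of_lt ha, Nat.mod_eq_of_lt hb] using congrArg Fin.val h

lemma Fin.add_one_ne_self {n : ℕ} [NeZero n] (hn : 2 ≤ n) (i : Fin n) : i + 1 ≠ i := by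
  intro h
  have h1 : ((1 : Fin n) : ℕ) = 0 := by
    rw [add_eq_left.mp h, Fin.val_zero]
  rw [Fin.val_one', Nat.mod_eq_of_lt (by omega)] at h1
  exact one_ne_zero h1

lemma cycSucc_eq_add_one {ℓ : ℕ} [NeZero ℓ] (i : Fin ℓ) : cycSucc i = i + 1 := by
  ext
  simp [cycSucc, Fin.val_add]

section

variable {V : Type} {E : Finset V → Prop} {ℓ : ℕ} {e : Fin ℓ → Finset V} {v : Fin ℓ → V}

namespace IsCycle

lemma isEdge (hc : IsCycle E e v) (i : Fin ℓ) : E (e i) := (hc.2.2.2 i).1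

lemma edge_injective (hc : IsCycle E e v) : Function.Injective e := hc.2.1

lemma link_injective (hc : IsCycle E e v) : Function.Injective v := hc.2.2.1

lemma link_mem (hc : IsCycle E e v) (i : Fin ℓ) : v i ∈ e i := (hc.2.2.2 i).2.1

end IsCycle

variable [NeZero ℓ]

namespace IsCycle

lemma link_mem_add_one (hc : IsCycle E e v) (i : Fin ℓ) : v i ∈ e (i + 1) := by
  simpa [cycSucc_eq_add_one] using (hc.2.2.2 i).2.2

lemma link_add_one_ne (hc : IsCycle E e v) (i : Fin ℓ) : v (i + 1) ≠ v i :=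
  hc.link_injective.ne (Fin.add_one_ne_self hc.1 i)

lemma exists_shortcut (hc : IsCycle E e v) {i : Fin ℓ} {d : ℕ} {x : V}
    (hd : 1 ≤ d) (hdℓ : d < ℓ) (hxi : x ∈ e i) (hxd : x ∈ e (i + (d : Fin ℓ))) (hxv : x ≠ v i)
    (hgap : ∀ t, 0 < t → t < d → x ∉ e (i + (t : Fin ℓ))) :
    ∃ (e' : Fin (d + 1) → Finset V) (v' : Fin (d + 1) → V),
      IsCycle E e' v' ∧ ∀ t, ∃ j, e' t = e j := by
  have hcast : ∀ a b : Fin (d + 1), i + ((a : ℕ) : Fin ℓ) = i + (b : ℕ) → a = b :=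
    fun a b h => Fin.ext (Fin.natCast_inj_of_lt (by omega) (by omega) (add_left_cancel h))
  have hx_ne_link : ∀ t : Fin (d + 1), (t : ℕ) ≠ d → x ≠ v (i + (t : ℕ)) := by
    rintro t ht rfl
    rcases Nat.eq_zero_or_pos t with h0 | hpos
    · exact hxv (by simp [h0])
    · exact hgap t hpos (by omega) (hc.link_mem _)
  refine ⟨fun t => e (i + (t : ℕ)), fun t => if (t : ℕ) = d then x else v (i + (t : ℕ)),
    ⟨by omega, fun a b h => hcast a b (hc.edge_injective h), fun a b h => ?_, fun t => ?_⟩,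
    fun t => ⟨_, rfl⟩⟩
  · dsimp only at h
    split_ifs at h with ha hb hb
    · exact Fin.ext (ha.trans hb.symm)
    · exact absurd h (hx_ne_link b hb)
    · exact absurd h.symm (hx_ne_link a ha)
    · exact hcast a b (hc.link_injective h)
  refine ⟨hc.isEdge _, ?_, ?_⟩ <;> dsimp only <;> split_ifs with ht
  · rwa [ht]
  · exact hc.link_mem _
  · have : (cycSucc t : ℕ) = 0 := by simp [cycSucc, ht]
    simpa [this] using hxi
  · have : (cycSucc t : ℕ) = t + 1 := Nat.mod_eq_of_lt (by omega)
    simpa [this, add_assoc] using hc.link_mem_add_one (i + (t : ℕ))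

end IsCycle

namespace IsMinCycle

lemma length_le_of_shortcut (hm : IsMinCycle E e v) {i : Fin ℓ} {d : ℕ} {x : V}
    (hd : 1 ≤ d) (hdℓ : d < ℓ) (hxi : x ∈ e i) (hxd : x ∈ e (i + (d : Fin ℓ))) (hxv : x ≠ v i)
    (hgap : ∀ t, 0 < t → t < d → x ∉ e (i + (t : Fin ℓ))) : ℓ ≤ d + 1 := by
  by_contra! h
  obtain ⟨e', v', hc', hsub⟩ := hm.1.exists_shortcut hd hdℓ hxi hxd hxv hgap
  exact hm.2 (d + 1) h e' v' ⟨hc', hsub⟩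

lemma eq_link_of_mem_add_one (hm : IsMinCycle E e v) (hℓ : 3 ≤ ℓ) {i : Fin ℓ} {x : V}
    (hxi : x ∈ e i) (hx : x ∈ e (i + 1)) : x = v i := by
  by_contra hxv
  have := hm.length_le_of_shortcut le_rfl (by omega) hxi (by simpa using hx) hxv (by omega)
  omega

lemma not_mem_add (hm : IsMinCycle E e v) {i : Fin ℓ} {d : ℕ} {x : V} (hd : 2 ≤ d)
    (hdℓ : d + 2 ≤ ℓ) (hxi : x ∈ e i) : x ∉ e (i + (d : Fin ℓ)) := by
  induction d using Nat.strong_induction_on generalizing i with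
  | _ d ih =>
  intro hxd
  by_cases hgap : ∃ t, 0 < t ∧ t < d ∧ x ∈ e (i + (t : Fin ℓ))
  · obtain ⟨t, ht0, htd, hxt⟩ := hgap
    by_cases ht : 2 ≤ t
    · exact ih t htd ht (by omega) hxi hxt
    by_cases hdt : 2 ≤ d - t
    · refine ih (d - t) (by omega) hdt (by omega) hxt ?_
      rwa [add_assoc, ← Nat.cast_add, Nat.add_sub_cancel' htd.le]
    obtain rfl : t = 1 := by omega
    obtain rfl : d = 2 := by omega
    have h1 := hm.eq_link_of_mem_add_one (by omega) hxi (by simpa using hxt)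
    have h2 := hm.eq_link_of_mem_add_one (by omega) (by simpa using hxt)
      (by rwa [add_assoc, one_add_one_eq_two, ← Nat.cast_ofNat])
    exact hm.1.link_add_one_ne i (h2.symm.trans h1)
  push Not at hgap
  have hxv : x ≠ v i := by
    rintro rfl
    exact hgap 1 one_pos (by omega) (by simpa using hm.1.link_mem_add_one i)
  have := hm.length_le_of_shortcut (by omega) (by omega) hxi hxd hxv hgap
  omega

lemma eq_link_or_eq_link (hm : IsMinCycle E e v) (hℓ : 3 ≤ ℓ) {i j : Fin ℓ} {x : V}
    (hij : i ≠ j) (hxi : x ∈ e i) (hxj : x ∈ e j) : x = v i ∨ x = v j := by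
  set d := (j - i : Fin ℓ).val with hd
  have hj : j = i + d := by simp [hd]
  have hd0 : d ≠ 0 := fun h => hij (by simpa [h] using hj.symm)
  have hdℓ : d < ℓ := Fin.is_lt _
  by_cases hd1 : d = 1
  · rw [hj, hd1, Nat.cast_one] at hxj
    exact Or.inl (hm.eq_link_of_mem_add_one hℓ hxi hxj)
  by_cases hdℓ1 : d = ℓ - 1
  · have hi : i = j + 1 := by
      rw [hj, hdℓ1, add_assoc, ← Nat.cast_add_one, Nat.sub_add_cancel (by omega),
        Fin.natCast_self, add_zero]
    exact Or.inr (hm.eq_link_of_mem_add_one hℓ hxj (hi ▸ hxi))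
  exact absurd (hj ▸ hxj) (hm.not_mem_add (by omega) (by omega) hxi)

end IsMinCycle

variable [DecidableEq V]

lemma IsCycle.biUnion_erase_link (hc : IsCycle E e v) :
    univ.biUnion (fun i => (e i).erase (v i)) = univ.biUnion e := by
  refine (biUnion_mono fun i _ => erase_subset _ _).antisymm fun x hx => ?_
  obtain ⟨i, -, hxi⟩ := mem_biUnion.mp hx
  refine mem_biUnion.mpr ?_
  by_cases hxv : x = v i
  · subst hxv
    exact ⟨i + 1, mem_univ _, mem_erase.mpr ⟨(hc.link_add_one_ne i).symm, hc.link_mem_add_one i⟩⟩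
  · exact ⟨i, mem_univ _, mem_erase.mpr ⟨hxv, hxi⟩⟩

lemma IsMinCycle.pairwiseDisjoint_erase_link (hm : IsMinCycle E e v) (hℓ : 3 ≤ ℓ) :
    ((univ : Finset (Fin ℓ)) : Set (Fin ℓ)).PairwiseDisjoint (fun i => (e i).erase (v i)) := by
  intro i _ j _ hij
  refine disjoint_left.mpr fun x hxi hxj => ?_
  rw [mem_erase] at hxi hxj
  exact (hm.eq_link_or_eq_link hℓ hij hxi.2 hxj.2).elim hxi.1 hxj.1

end

theorem minimal_cycle_vertex_count :
    ∀ k ℓ : ℕ, 2 ≤ k → 3 ≤ ℓ → ∀ (V : Type) [inst : DecidableEq V]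
      (E : Finset V → Prop), (∀ s : Finset V, E s → s.card = k) →
      ∀ (e : Fin ℓ → Finset V) (v : Fin ℓ → V), IsMinCycle E e v →
        (Finset.univ.biUnion e).card = (k - 1) * ℓ := by
  intro k ℓ _ hℓ V _ E hcard e v hm
  have : NeZero ℓ := ⟨by omega⟩
  rw [← hm.1.biUnion_erase_link, card_biUnion (hm.pairwiseDisjoint_erase_link hℓ)]
  have hk : ∀ i, ((e i).erase (v i)).card = k - 1 := fun i => by
    rw [card_erase_of_mem (hm.1.link_mem i), hcard _ (hm.1.isEdge i)]
  simp [hk, mul_comm]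
end

section
/- For all integers k ≥ 3, ℓ ≥ 2 and n ≥ 1, the number of minimal cycles of length ℓ in the k-uniform hypergraph H_{k-AP}({1,...,n}) is at most n^ℓ k^{2ℓ}. -/
/-- The `k`-AP `{a, a + d, …, a + (k-1)d}` as a finset. -/
def kAPFinset (k a d : ℕ) : Finset ℕ := (Finset.range k).image (fun i => a + i * d)

/-- The edges of the `k`-uniform hypergraph `H_{k-AP}(A)`: the `k`-APs contained in `A`. -/
def kAPEdge (k : ℕ) (A : Finset ℕ) (s : Finset ℕ) : Prop :=
  ∃ a d : ℕ, 1 ≤ d ∧ s = kAPFinset k a d ∧ s ⊆ A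


lemma cycSucc_val {ℓ : ℕ} (i : Fin ℓ) :
    (cycSucc i).val = if i.val + 1 = ℓ then 0 else i.val + 1 := by
  have hi := i.isLt
  unfold cycSucc
  split_ifs with h
  · simp [h]
  · exact Nat.mod_eq_of_lt (by omega)

lemma cycSucc_injective {ℓ : ℕ} : Function.Injective (cycSucc : Fin ℓ → Fin ℓ) := by
  intro i j h
  have hi := i.isLt
  have hj := j.isLt
  have h' := congrArg Fin.val h
  rw [cycSucc_val, cycSucc_val] at h'
  ext
  split_ifs at h' <;> omega

lemma cycSucc_surjective {ℓ : ℕ} : Function.Surjective (cycSucc : Fin ℓ → Fin ℓ) :=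
  Finite.injective_iff_surjective.mp cycSucc_injective

lemma cycSucc_ne_self {ℓ : ℕ} (hℓ : 2 ≤ ℓ) (i : Fin ℓ) : cycSucc i ≠ i := by
  intro h
  have h' := congrArg Fin.val h
  rw [cycSucc_val] at h'
  split_ifs at h' <;> omega

lemma kAPFinset_eq_of_two_terms {k a d a' d' p q : ℕ} (hpq : p ≠ q)
    (hp : a + p * d = a' + p * d') (hq : a + q * d = a' + q * d') :
    kAPFinset k a d = kAPFinset k a' d' := by
  have hd : d = d' := by
    have hpq' : ((p : ℤ) - q) ≠ 0 := sub_ne_zero.mpr (by exact_mod_cast hpq)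
    have hp' : (a : ℤ) + p * d = a' + p * d' := by exact_mod_cast hp
    have hq' : (a : ℤ) + q * d = a' + q * d' := by exact_mod_cast hq
    have h : ((p : ℤ) - q) * d = (p - q) * d' := by linear_combination hp' - hq'
    exact_mod_cast mul_left_cancel₀ hpq' h
  subst hd
  obtain rfl : a = a' := by omega
  rfl

def kAPCycles (k ℓ : ℕ) (A : Finset ℕ) : Set ((Fin ℓ → Finset ℕ) × (Fin ℓ → ℕ)) :=
  {c | IsCycle (kAPEdge k A) c.1 c.2}

section kAPCycles

variable {k ℓ : ℕ} {A : Finset ℕ}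

lemma IsCycle.exists_kAP_positions {e : Fin ℓ → Finset ℕ} {v : Fin ℓ → ℕ}
    (hc : IsCycle (kAPEdge k A) e v) (i : Fin ℓ) :
    ∃ a d : ℕ, ∃ p q : Fin k, e (cycSucc i) = kAPFinset k a d ∧
      a + p * d = v i ∧ a + q * d = v (cycSucc i) := by
  obtain ⟨a, d, -, hs, -⟩ := (hc.2.2.2 (cycSucc i)).1
  have hvi : v i ∈ kAPFinset k a d := hs ▸ (hc.2.2.2 i).2.2
  have hvi' : v (cycSucc i) ∈ kAPFinset k a d := hs ▸ (hc.2.2.2 (cycSucc i)).2.1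
  simp only [kAPFinset, Finset.mem_image, Finset.mem_range] at hvi hvi'
  obtain ⟨p, hp, hpv⟩ := hvi
  obtain ⟨q, hq, hqv⟩ := hvi'
  exact ⟨a, d, ⟨p, hp⟩, ⟨q, hq⟩, hs, hpv, hqv⟩

lemma IsCycle.vertex_mem {e : Fin ℓ → Finset ℕ} {v : Fin ℓ → ℕ}
    (hc : IsCycle (kAPEdge k A) e v) (i : Fin ℓ) : v i ∈ A := by
  obtain ⟨-, -, -, -, hsub⟩ := (hc.2.2.2 i).1
  exact hsub (hc.2.2.2 i).2.1

/-- A cycle of `H_{k-AP}(A)` is encoded by its linking vertices together with, for each `i`,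
the positions of `v i` and `v (i + 1)` in the progression `e (i + 1)`: two distinct terms at
known positions determine a progression. -/
lemma exists_injective_kAPCycle_code :
    ∃ F : kAPCycles k ℓ A → (Fin ℓ → A) × (Fin ℓ → Fin k × Fin k), Function.Injective F := by
  choose a d p q he hp hq using fun c : kAPCycles k ℓ A => c.2.exists_kAP_positions
  refine ⟨fun c => (fun i => ⟨c.1.2 i, c.2.vertex_mem i⟩, fun i => (p c i, q c i)), ?_⟩
  rintro c c' hcc'
  simp only [Prod.mk.injEq, funext_iff, Subtype.mk.injEq] at hcc'
  obtain ⟨hv, hpq⟩ := hcc'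
  have hedge : ∀ i, c.1.1 (cycSucc i) = c'.1.1 (cycSucc i) := by
    intro i
    have hpq_ne : (p c i : ℕ) ≠ q c i := by
      intro h
      refine cycSucc_ne_self c.2.1 i (c.2.2.2.1 ?_)
      rw [← hq, ← hp, Fin.ext h]
    rw [he, he]
    apply kAPFinset_eq_of_two_terms hpq_ne
    · rw [hp, (hpq i).1, hp, hv]
    · rw [hq, (hpq i).2, hq, hv]
  refine Subtype.ext (Prod.ext (funext fun j => ?_) (funext hv))
  obtain ⟨i, rfl⟩ := cycSucc_surjective j
  exact hedge i

lemma finite_kAPCycles : (kAPCycles k ℓ A).Finite := by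
  obtain ⟨F, hF⟩ := exists_injective_kAPCycle_code (k := k) (ℓ := ℓ) (A := A)
  exact Set.finite_coe_iff.mp (Finite.of_injective F hF)

lemma ncard_kAPCycles_le : (kAPCycles k ℓ A).ncard ≤ A.card ^ ℓ * k ^ (2 * ℓ) := by
  obtain ⟨F, hF⟩ := exists_injective_kAPCycle_code (k := k) (ℓ := ℓ) (A := A)
  calc _ = Nat.card _ := (Nat.card_coe_set_eq _).symm
    _ ≤ Nat.card ((Fin ℓ → A) × (Fin ℓ → Fin k × Fin k)) := Nat.card_le_card_of_injective F hF
    _ = A.card ^ ℓ * k ^ (2 * ℓ) := by simp [Nat.card_eq_fintype_card, pow_mul', mul_pow, sq]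

end kAPCycles

theorem count_minimal_cycles :
    ∀ k ℓ n : ℕ, 3 ≤ k → 2 ≤ ℓ →
      Set.ncard {c : (Fin ℓ → Finset ℕ) × (Fin ℓ → ℕ) |
          IsMinCycle (kAPEdge k (Finset.Icc 1 n)) c.1 c.2} ≤
        n ^ ℓ * k ^ (2 * ℓ) := by
  intro k ℓ n _ _
  calc _ ≤ (kAPCycles k ℓ (Finset.Icc 1 n)).ncard :=
        Set.ncard_le_ncard (fun c hc => hc.1) finite_kAPCycles
    _ ≤ (Finset.Icc 1 n).card ^ ℓ * k ^ (2 * ℓ) := ncard_kAPCycles_le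
    _ = n ^ ℓ * k ^ (2 * ℓ) := by rw [Nat.card_Icc, Nat.add_sub_cancel]
end
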